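/- The function W : (ℂ∖{0})² → ℂ defined by W(y_1, y_2) = y_1 − 2y_2 + 2·y_1^{−1}y_2^{−1} − y_2^{−1} − 2·y_1 y_2^{−1} + y_1^{2} y_2^{−1} has exactly 6 critical points, and each of these critical points is nondegenerate. -/

import Mathlib

/-- The potential function of the monotone fiber `L(2,2.5)` in `X̂₃` with the chosen bulk deformation (energy factor dropped). -/
noncomputable def W : ℂ → ℂ → ℂ := fun y₁ y₂ =>
  y₁ - 2 * y₂ + 2 * y₁⁻¹ * y₂⁻¹ - y₂⁻¹ - 2 * y₁ * y₂⁻¹ + y₁ ^ 2 * y₂⁻¹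

/-- A point of `(ℂ∖{0})²` is a critical point of `W` if both partial
derivatives of `W` vanish there. -/
def IsCritPt (p : ℂ × ℂ) : Prop :=
  p.1 ≠ 0 ∧ p.2 ≠ 0 ∧
    deriv (fun z => W z p.2) p.1 = 0 ∧ deriv (fun z => W p.1 z) p.2 = 0

/-- The Hessian determinant
`(∂²W/∂y₁²)(∂²W/∂y₂²) - (∂²W/∂y₁∂y₂)²` of `W` at a point. -/
noncomputable def hessDet (p : ℂ × ℂ) : ℂ :=
  deriv (deriv (fun z => W z p.2)) p.1 * deriv (deriv (fun z => W p.1 z)) p.2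
    - (deriv (fun w => deriv (fun z => W z w) p.1) p.2) ^ 2

/-!
Write `W a b = a - 2 * b + coeff a * b⁻¹` with `coeff a = a ^ 2 - 2 * a - 1 + 2 * a⁻¹`. The
critical equations say `b = -coeff' a` and `coeff a + 2 * coeff' a ^ 2 = 0`; multiplied by `a ^ 4`
the latter is the sextic `critPoly a = 0`. At a critical point the Hessian determinant is
`-(1 + 4 * coeff'' a) / coeff' a ^ 2`, while at a root of `critPoly` its derivative is
`a ^ 4 * coeff' a * (1 + 4 * coeff'' a)`. So both the count (six simple roots) and the
nondegeneracy reduce to `coeff' a ≠ 0` and `1 + 4 * coeff'' a ≠ 0` at the roots: the first because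
`coeff` and `coeff'` have no common zero, the second because `critPoly` is coprime to
`9 * X ^ 3 + 16`.
-/

open Filter Topology Polynomial

theorem Polynomial.ncard_setOf_isRoot_eq_natDegree {K : Type*} [Field K] {p : K[X]}
    (hp : p ≠ 0) (hs : p.Splits) (h : ∀ z, p.IsRoot z → ¬ (derivative p).IsRoot z) :
    {z | p.IsRoot z}.ncard = p.natDegree := by
  classical
  have hnodup : p.roots.Nodup := Multiset.nodup_iff_count_le_one.2 fun z => by
    rw [count_roots]
    by_contra! hz
    obtain ⟨hz₀, hz₁⟩ := (one_lt_rootMultiplicity_iff_isRoot hp).1 hz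
    exact h z hz₀ hz₁
  have hset : {z | p.IsRoot z} = ↑p.roots.toFinset := by
    ext; simp [mem_roots hp]
  rw [hset, Set.ncard_coe_finset, Multiset.toFinset_card_of_nodup hnodup,
    hs.natDegree_eq_card_roots]

theorem hasDerivAt_inv_sq {𝕜 : Type*} [NontriviallyNormedField 𝕜] {a : 𝕜} (ha : a ≠ 0) :
    HasDerivAt (fun z : 𝕜 => (z ^ 2)⁻¹) (-2 * (a ^ 3)⁻¹) a :=
  ((hasDerivAt_pow 2 a).inv (pow_ne_zero 2 ha)).congr_deriv (by field_simp; push_cast; ring)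

namespace W

noncomputable def coeff (a : ℂ) : ℂ := a ^ 2 - 2 * a - 1 + 2 * a⁻¹

noncomputable def coeff' (a : ℂ) : ℂ := 2 * a - 2 - 2 * (a ^ 2)⁻¹

noncomputable def coeff'' (a : ℂ) : ℂ := 2 + 4 * (a ^ 3)⁻¹

theorem apply_eq (a b : ℂ) : W a b = a - 2 * b + coeff a * b⁻¹ := by
  simp only [W, coeff]
  ring

theorem hasDerivAt_coeff {a : ℂ} (ha : a ≠ 0) : HasDerivAt coeff (coeff' a) a :=
  ((((hasDerivAt_pow 2 a).sub ((hasDerivAt_id' a).const_mul 2)).sub_const 1).add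
    ((hasDerivAt_inv ha).const_mul 2)).congr_deriv (by simp only [coeff']; ring)

theorem hasDerivAt_coeff' {a : ℂ} (ha : a ≠ 0) : HasDerivAt coeff' (coeff'' a) a :=
  ((((hasDerivAt_id' a).const_mul 2).sub_const 2).sub
    ((hasDerivAt_inv_sq ha).const_mul 2)).congr_deriv (by simp only [coeff'']; ring)

theorem hasDerivAt_fst (b : ℂ) {a : ℂ} (ha : a ≠ 0) :
    HasDerivAt (fun z => W z b) (1 + coeff' a * b⁻¹) a := by
  simp only [apply_eq]
  exact (((hasDerivAt_id' a).sub_const (2 * b)).add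
    ((hasDerivAt_coeff ha).mul_const b⁻¹)).congr_deriv (by ring)

theorem hasDerivAt_snd (a : ℂ) {b : ℂ} (hb : b ≠ 0) :
    HasDerivAt (fun w => W a w) (-2 - coeff a * (b ^ 2)⁻¹) b := by
  simp only [apply_eq]
  exact ((((hasDerivAt_id' b).const_mul 2).const_sub a).add
    ((hasDerivAt_inv hb).const_mul (coeff a))).congr_deriv (by ring)

theorem deriv_deriv_fst {a b : ℂ} (ha : a ≠ 0) :
    deriv (deriv (fun z => W z b)) a = coeff'' a * b⁻¹ := by
  have hfst : deriv (fun z => W z b) =ᶠ[𝓝 a] fun z => 1 + coeff' z * b⁻¹ :=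
    (eventually_ne_nhds ha).mono fun z hz => (hasDerivAt_fst b hz).deriv
  rw [hfst.deriv_eq]
  exact (((hasDerivAt_coeff' ha).mul_const b⁻¹).const_add 1).deriv

theorem deriv_deriv_snd {a b : ℂ} (hb : b ≠ 0) :
    deriv (deriv (fun w => W a w)) b = 2 * coeff a * (b ^ 3)⁻¹ := by
  have hsnd : deriv (fun w => W a w) =ᶠ[𝓝 b] fun w => -2 - coeff a * (w ^ 2)⁻¹ :=
    (eventually_ne_nhds hb).mono fun w hw => (hasDerivAt_snd a hw).deriv
  rw [hsnd.deriv_eq, (((hasDerivAt_inv_sq hb).const_mul (coeff a)).const_sub (-2)).deriv]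
  ring

theorem deriv_deriv_fst_snd {a b : ℂ} (ha : a ≠ 0) (hb : b ≠ 0) :
    deriv (fun w => deriv (fun z => W z w) a) b = -coeff' a * (b ^ 2)⁻¹ := by
  have hfst : (fun w => deriv (fun z => W z w) a) = fun w => 1 + coeff' a * w⁻¹ :=
    funext fun w => (hasDerivAt_fst w ha).deriv
  rw [hfst, (((hasDerivAt_inv hb).const_mul (coeff' a)).const_add 1).deriv]
  ring

theorem hessDet_eq {a b : ℂ} (ha : a ≠ 0) (hb : b ≠ 0) :
    hessDet (a, b) = (2 * coeff a * coeff'' a - coeff' a ^ 2) / b ^ 4 := by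
  simp only [hessDet, deriv_deriv_fst ha, deriv_deriv_snd hb, deriv_deriv_fst_snd ha hb]
  field_simp

theorem coeff'_ne_zero_of_coeff_eq_zero {a : ℂ} (ha : a ≠ 0) (h : coeff a = 0) : coeff' a ≠ 0 := by
  have hroots : (a - 1) * (a + 1) * (a - 2) = 0 := calc
    (a - 1) * (a + 1) * (a - 2) = a * coeff a := by simp only [coeff]; field_simp; ring
    _ = 0 := by rw [h, mul_zero]
  simp only [mul_eq_zero, sub_eq_zero, add_eq_zero_iff_eq_neg] at hroots
  rcases hroots with (rfl | rfl) | rfl <;> norm_num [coeff']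

noncomputable def critPoly : ℂ[X] :=
  9 * X ^ 6 - 18 * X ^ 5 + 7 * X ^ 4 - 14 * X ^ 3 + 16 * X ^ 2 + 8

theorem natDegree_critPoly : critPoly.natDegree = 6 := by
  unfold critPoly
  compute_degree!

theorem critPoly_ne_zero : critPoly ≠ 0 :=
  ne_zero_of_natDegree_gt (n := 0) (by rw [natDegree_critPoly]; norm_num)

theorem eval_critPoly {a : ℂ} (ha : a ≠ 0) :
    critPoly.eval a = a ^ 4 * (coeff a + 2 * coeff' a ^ 2) := by
  simp only [critPoly, coeff, coeff', eval_add, eval_sub, eval_mul, eval_pow, eval_X, eval_ofNat]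
  field_simp
  ring

theorem eval_derivative_critPoly {a : ℂ} (ha : a ≠ 0) :
    (derivative critPoly).eval a =
      4 * a ^ 3 * (coeff a + 2 * coeff' a ^ 2) + a ^ 4 * coeff' a * (1 + 4 * coeff'' a) := by
  have hderiv : (derivative critPoly).eval a =
      54 * a ^ 5 - 90 * a ^ 4 + 28 * a ^ 3 - 42 * a ^ 2 + 32 * a := by
    simp [critPoly]
    ring
  rw [hderiv]
  simp only [coeff, coeff', coeff'']
  field_simp
  ring

theorem ne_zero_of_isRoot_critPoly {a : ℂ} (h : critPoly.IsRoot a) : a ≠ 0 := by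
  rintro rfl
  simp [critPoly] at h

theorem isRoot_critPoly_iff {a : ℂ} (ha : a ≠ 0) :
    critPoly.IsRoot a ↔ coeff a + 2 * coeff' a ^ 2 = 0 := by
  rw [IsRoot, eval_critPoly ha, mul_eq_zero, or_iff_right (pow_ne_zero 4 ha)]

theorem coeff'_ne_zero {a : ℂ} (h : critPoly.IsRoot a) : coeff' a ≠ 0 := by
  have ha := ne_zero_of_isRoot_critPoly h
  intro h'
  have hc : coeff a = 0 := by simpa [h'] using (isRoot_critPoly_iff ha).1 h
  exact coeff'_ne_zero_of_coeff_eq_zero ha hc h'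

theorem one_add_four_mul_coeff''_ne_zero {a : ℂ} (h : critPoly.IsRoot a) :
    1 + 4 * coeff'' a ≠ 0 := by
  have ha := ne_zero_of_isRoot_critPoly h
  intro h'
  have hcube : 9 * a ^ 3 + 16 = 0 := calc
    9 * a ^ 3 + 16 = (1 + 4 * coeff'' a) * a ^ 3 := by simp only [coeff'']; field_simp; ring
    _ = 0 := by rw [h', zero_mul]
  have hP : 9 * a ^ 6 - 18 * a ^ 5 + 7 * a ^ 4 - 14 * a ^ 3 + 16 * a ^ 2 + 8 = 0 := by
    simpa [critPoly] using h
  have : (39804712 : ℂ) = 0 := by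
    -- Bézout identity for `critPoly` and `9 * X ^ 3 + 16`
    linear_combination (276777 - 341658 * a - 285930 * a ^ 2) * hP
      + (2349406 + 170829 * a - 133812 * a ^ 2 - 737703 * a ^ 3 - 230202 * a ^ 4
        + 285930 * a ^ 5) * hcube
  norm_num at this

theorem not_isRoot_derivative_critPoly {a : ℂ} (h : critPoly.IsRoot a) :
    ¬ (derivative critPoly).IsRoot a := by
  have ha := ne_zero_of_isRoot_critPoly h
  rw [IsRoot, eval_derivative_critPoly ha, (isRoot_critPoly_iff ha).1 h, mul_zero, zero_add]
  exact mul_ne_zero (mul_ne_zero (pow_ne_zero 4 ha) (coeff'_ne_zero h))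
    (one_add_four_mul_coeff''_ne_zero h)

theorem isCritPt_iff {a b : ℂ} : IsCritPt (a, b) ↔ critPoly.IsRoot a ∧ b = -coeff' a := by
  constructor
  · rintro ⟨ha, hb, h₁, h₂⟩
    rw [(hasDerivAt_fst b ha).deriv] at h₁
    rw [(hasDerivAt_snd a hb).deriv] at h₂
    have hb' : b = -coeff' a := by field_simp at h₁; linear_combination h₁
    have hc : coeff a = -2 * b ^ 2 := by field_simp at h₂; linear_combination -h₂
    exact ⟨(isRoot_critPoly_iff ha).2 (by rw [hc, hb']; ring), hb'⟩
  · rintro ⟨h, rfl⟩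
    have ha := ne_zero_of_isRoot_critPoly h
    have hc' := coeff'_ne_zero h
    refine ⟨ha, neg_ne_zero.2 hc', ?_, ?_⟩
    · rw [(hasDerivAt_fst _ ha).deriv]
      field_simp
      ring
    · rw [(hasDerivAt_snd a (neg_ne_zero.2 hc')).deriv]
      field_simp
      linear_combination -(isRoot_critPoly_iff ha).1 h

theorem setOf_isCritPt :
    {p : ℂ × ℂ | IsCritPt p} = (fun a => (a, -coeff' a)) '' {a | critPoly.IsRoot a} := by
  ext ⟨a, b⟩
  simp only [Set.mem_ofPred_eq, isCritPt_iff, Set.mem_image, Prod.mk.injEq]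
  constructor
  · rintro ⟨h, rfl⟩
    exact ⟨a, h, rfl, rfl⟩
  · rintro ⟨a, h, rfl, rfl⟩
    exact ⟨h, rfl⟩

theorem hessDet_of_isRoot {a : ℂ} (h : critPoly.IsRoot a) :
    hessDet (a, -coeff' a) = -(1 + 4 * coeff'' a) / coeff' a ^ 2 := by
  have ha := ne_zero_of_isRoot_critPoly h
  have hc' := coeff'_ne_zero h
  rw [hessDet_eq ha (neg_ne_zero.2 hc')]
  field_simp
  linear_combination 2 * coeff'' a * (isRoot_critPoly_iff ha).1 h

end W

/-- `W` has exactly 6 critical points in `(ℂ∖{0})²`, and each of them is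
nondegenerate (nonvanishing Hessian determinant). -/
theorem W_critical_points :
    {p : ℂ × ℂ | IsCritPt p}.ncard = 6 ∧
      ∀ p : ℂ × ℂ, IsCritPt p → hessDet p ≠ 0 := by
  refine ⟨?_, ?_⟩
  · have hinj : Function.Injective fun a : ℂ => (a, -W.coeff' a) := fun _ _ h => congrArg Prod.fst h
    rw [W.setOf_isCritPt, Set.ncard_image_of_injective _ hinj,
      Polynomial.ncard_setOf_isRoot_eq_natDegree W.critPoly_ne_zero (IsAlgClosed.splits _)
        fun _ => W.not_isRoot_derivative_critPoly, W.natDegree_critPoly]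
  · rintro ⟨a, b⟩ hcrit
    obtain ⟨h, rfl⟩ := W.isCritPt_iff.1 hcrit
    rw [W.hessDet_of_isRoot h]
    exact div_ne_zero (neg_ne_zero.2 (W.one_add_four_mul_coeff''_ne_zero h))
      (pow_ne_zero 2 (W.coeff'_ne_zero h))
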